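/- Define ν : ℤ≥0 × ℂ → Sym²(ℂ) by ν(n, z) = [(n + √z)², (n − √z)²] for any fixed square root √z of z. Then ν is well defined (independent of the choice of square root) and for all n, m ∈ ℤ≥0 and z ∈ ℂ, the 4-element multiset ν(n+m, z) ∪ ν(|n−m|, z) equals the 4-element multiset obtained by applying ν(n, ·) to both elements of ν(m, z). That is, ν is an action of the Buchstaber–Novikov 2-valued group on ℂ. -/
import Mathlib

private lemma pairswap1 (a b c d : ℂ) :
    ({a, b} : Multiset ℂ) + {c, d} = ({a, d} : Multiset ℂ) + {b, c} := by
  show (a ::ₘ b ::ₘ c ::ₘ d ::ₘ 0 : Multiset ℂ) = a ::ₘ d ::ₘ b ::ₘ c ::ₘ 0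
  rw [Multiset.cons_swap c d, Multiset.cons_swap b d]

private lemma pairswap2 (a b c d : ℂ) :
    ({a, b} : Multiset ℂ) + {c, d} = ({a, c} : Multiset ℂ) + {b, d} := by
  show (a ::ₘ b ::ₘ c ::ₘ d ::ₘ 0 : Multiset ℂ) = a ::ₘ c ::ₘ b ::ₘ d ::ₘ 0
  rw [Multiset.cons_swap b c]

/-- ν(n, z) = [(n + √z)², (n − √z)²] is well defined (independent of the choice of square
root of z) and defines an action of the Buchstaber–Novikov 2-valued group (ℤ≥0, μ) with
μ(n,m) = [n+m, |n−m|] on ℂ: the 4-element multiset ν(n+m, z) ∪ ν(|n−m|, z) equals the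
multiset obtained by applying ν(n, ·) to both elements (m+√z)², (m−√z)² of ν(m, z),
where (m ± √z) serve as square roots of these elements. -/
theorem nu_action (n m : ℕ) (z w : ℂ) (hw : w ^ 2 = z) :
    (∀ w' : ℂ, w' ^ 2 = z →
      ({((n : ℂ) + w) ^ 2, ((n : ℂ) - w) ^ 2} : Multiset ℂ) =
        {((n : ℂ) + w') ^ 2, ((n : ℂ) - w') ^ 2}) ∧
    (({((n + m : ℕ) + w) ^ 2, ((n + m : ℕ) - w) ^ 2} : Multiset ℂ) +
      {((Nat.dist n m : ℕ) + w) ^ 2, ((Nat.dist n m : ℕ) - w) ^ 2}) =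
    (({((n : ℂ) + ((m : ℂ) + w)) ^ 2, ((n : ℂ) - ((m : ℂ) + w)) ^ 2} : Multiset ℂ) +
      {((n : ℂ) + ((m : ℂ) - w)) ^ 2, ((n : ℂ) - ((m : ℂ) - w)) ^ 2}) := by
  constructor
  · intro w' hw'
    have h : (w' - w) * (w' + w) = 0 := by
      have : w' ^ 2 = w ^ 2 := by rw [hw, hw']
      linear_combination this
    rcases mul_eq_zero.mp h with h | h
    · rw [sub_eq_zero.mp h]
    · have hww : w' = -w := eq_neg_of_add_eq_zero_left h
      subst hww
      rw [Multiset.pair_comm]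
      ring_nf
  · rcases le_or_gt m n with hmn | hmn
    · have hd : (Nat.dist n m : ℂ) = (n : ℂ) - m := by
        rw [Nat.dist_eq_sub_of_le_right hmn]
        push_cast [hmn]; ring
      rw [hd]
      push_cast
      have e1 : ((n : ℂ) + m + w) ^ 2 = ((n : ℂ) + (m + w)) ^ 2 := by ring
      have e2 : ((n : ℂ) + m - w) ^ 2 = ((n : ℂ) + (m - w)) ^ 2 := by ring
      have e3 : ((n : ℂ) - m + w) ^ 2 = ((n : ℂ) - (m - w)) ^ 2 := by ring
      have e4 : ((n : ℂ) - m - w) ^ 2 = ((n : ℂ) - (m + w)) ^ 2 := by ring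
      rw [e1, e2, e3, e4]
      exact pairswap1 _ _ _ _
    · have hd : (Nat.dist n m : ℂ) = (m : ℂ) - n := by
        rw [Nat.dist_eq_sub_of_le hmn.le]
        push_cast [hmn.le]; ring
      rw [hd]
      push_cast
      have e1 : ((n : ℂ) + m + w) ^ 2 = ((n : ℂ) + (m + w)) ^ 2 := by ring
      have e2 : ((n : ℂ) + m - w) ^ 2 = ((n : ℂ) + (m - w)) ^ 2 := by ring
      have e3 : ((m : ℂ) - n + w) ^ 2 = ((n : ℂ) - (m + w)) ^ 2 := by ring
      have e4 : ((m : ℂ) - n - w) ^ 2 = ((n : ℂ) - (m - w)) ^ 2 := by ring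
      rw [e1, e2, e3, e4]
      exact pairswap2 _ _ _ _
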